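/- Under the assumption M ⊥ R | X, Y, G=1, the conditional expectation of the odds ratio satisfies E[OR(X,Y) | R=1, X=x, M=m, G=1] = p(Y=0 | R=1, X=x, M=m, G=1) / p(Y=0 | R=0, X=x, M=m, G=1), where OR(x,y) = [p(R=0|X=x,Y=y,G=1) p(R=1|X=x,Y=0,G=1)] / [p(R=1|X=x,Y=y,G=1) p(R=0|X=x,Y=0,G=1)]. -/

import Mathlib

open Finset Set Real

noncomputable def Pr {Ω : Type*} [Fintype Ω] (μ : Ω → ℝ) (A : Set Ω) : ℝ :=
  ∑ ω, A.indicator μ ω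

noncomputable def cPr {Ω : Type*} [Fintype Ω] (μ : Ω → ℝ) (A B : Set Ω) : ℝ :=
  Pr μ (A ∩ B) / Pr μ B

noncomputable def cE {Ω : Type*} [Fintype Ω] (μ : Ω → ℝ) (f : Ω → ℝ) (B : Set Ω) : ℝ :=
  (∑ ω, B.indicator (fun ω' => μ ω' * f ω') ω) / Pr μ B

noncomputable def OddsR {Ω 𝓧 : Type*} [Fintype Ω] (μ : Ω → ℝ) (X : Ω → 𝓧) (Y : Ω → ℝ)
    (R G : Ω → ℕ) (x : 𝓧) (y : ℝ) : ℝ :=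
  (cPr μ {ω | R ω = 0} {ω | X ω = x ∧ Y ω = y ∧ G ω = 1} *
      cPr μ {ω | R ω = 1} {ω | X ω = x ∧ Y ω = 0 ∧ G ω = 1}) /
  (cPr μ {ω | R ω = 1} {ω | X ω = x ∧ Y ω = y ∧ G ω = 1} *
      cPr μ {ω | R ω = 0} {ω | X ω = x ∧ Y ω = 0 ∧ G ω = 1})

/- Conditional independence of `M` and `R` given `(X, Y)` means that the odds of `R = 0` against
`R = 1` in the stratum `(X, Y) = (x, y)` are the same as in its cell `M = m`. Writing
`q_r(y) = p(Y = y, R = r | x, m)`, the odds ratio is therefore `OR(x, y) = q₀(y) q₁(0) / (q₁(y) q₀(0))`,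
so `OR(x, y) q₁(y) = q₀(y) q₁(0) / q₀(0)`. Summing over `y` and dividing by `p(R = 1 | x, m)` gives
`q₁(0) p(R = 0 | x, m) / (q₀(0) p(R = 1 | x, m))`, which is the claimed ratio. -/

section Discrete

variable {Ω β : Type*} [Fintype Ω] {μ : Ω → ℝ}

lemma Pr_mono (hμ : ∀ ω, 0 ≤ μ ω) {A B : Set Ω} (h : A ⊆ B) : Pr μ A ≤ Pr μ B :=
  sum_le_sum fun ω _ => indicator_le_indicator_of_subset h hμ ω

lemma sum_indicator_mul_comp [DecidableEq β] (S : Set Ω) (Y : Ω → β) (F : β → ℝ) :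
    ∑ ω, S.indicator (fun ω => μ ω * F (Y ω)) ω =
      ∑ y ∈ univ.image Y, F y * Pr μ ({ω | Y ω = y} ∩ S) := by
  have hterm : ∀ y ω, F y * ({ω | Y ω = y} ∩ S).indicator μ ω =
      if Y ω = y then S.indicator (fun ω => μ ω * F (Y ω)) ω else 0 := by
    intro y ω
    by_cases hy : Y ω = y <;> by_cases hS : ω ∈ S <;> simp [indicator, hy, hS, mul_comm]
  simp only [Pr, mul_sum, hterm]
  rw [sum_comm]
  exact sum_congr rfl fun ω _ => by rw [sum_ite_eq, if_pos (mem_image_of_mem Y (mem_univ ω))]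

lemma Pr_eq_sum_image [DecidableEq β] (S : Set Ω) (Y : Ω → β) :
    Pr μ S = ∑ y ∈ univ.image Y, Pr μ ({ω | Y ω = y} ∩ S) := by
  have h := sum_indicator_mul_comp (μ := μ) S Y fun _ => 1
  simp only [mul_one, one_mul] at h
  exact h

lemma cE_eq_sum_image [DecidableEq β] {f : Ω → ℝ} {S : Set Ω} (Y : Ω → β) (F : β → ℝ)
    (hf : ∀ ω ∈ S, f ω = F (Y ω)) :
    cE μ f S = (∑ y ∈ univ.image Y, F y * Pr μ ({ω | Y ω = y} ∩ S)) / Pr μ S := by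
  rw [cE, ← sum_indicator_mul_comp, indicator_congr fun ω hω => by rw [hf ω hω]]

lemma cPr_div_cPr_eq_of_indep (hμ : ∀ ω, 0 ≤ μ ω) {A B₀ B₁ C : Set Ω}
    (hpos : 0 < Pr μ (A ∩ B₁ ∩ C))
    (h₀ : cPr μ (A ∩ B₀) C = cPr μ A C * cPr μ B₀ C)
    (h₁ : cPr μ (A ∩ B₁) C = cPr μ A C * cPr μ B₁ C) :
    cPr μ B₀ C / cPr μ B₁ C = Pr μ (A ∩ B₀ ∩ C) / Pr μ (A ∩ B₁ ∩ C) := by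
  have hC : Pr μ C ≠ 0 := (hpos.trans_le (Pr_mono hμ inter_subset_right)).ne'
  have hA : cPr μ A C ≠ 0 := div_ne_zero
    (hpos.trans_le (Pr_mono hμ (inter_subset_inter_left _ inter_subset_left))).ne' hC
  calc cPr μ B₀ C / cPr μ B₁ C = cPr μ (A ∩ B₀) C / cPr μ (A ∩ B₁) C := by
        rw [h₀, h₁, mul_div_mul_left _ _ hA]
    _ = _ := div_div_div_cancel_right₀ hC _ _

end Discrete

section Missingness

variable {Ω 𝓧 𝓜 : Type*} {X : Ω → 𝓧} {M : Ω → 𝓜} {Y : Ω → ℝ} {R G : Ω → ℕ} {x : 𝓧} {m : 𝓜}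

lemma OddsR_eq_div [Fintype Ω] (μ : Ω → ℝ) (y : ℝ) :
    OddsR μ X Y R G x y =
      (cPr μ {ω | R ω = 0} {ω | X ω = x ∧ Y ω = y ∧ G ω = 1} /
          cPr μ {ω | R ω = 1} {ω | X ω = x ∧ Y ω = y ∧ G ω = 1}) /
        (cPr μ {ω | R ω = 0} {ω | X ω = x ∧ Y ω = 0 ∧ G ω = 1} /
          cPr μ {ω | R ω = 1} {ω | X ω = x ∧ Y ω = 0 ∧ G ω = 1}) :=
  (div_div_div_eq _ _ _ _).symm

lemma setOf_Y_inter_eq (y : ℝ) (r : ℕ) :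
    {ω | Y ω = y} ∩ {ω | R ω = r ∧ X ω = x ∧ M ω = m ∧ G ω = 1} =
      {ω | X ω = x ∧ M ω = m ∧ Y ω = y ∧ R ω = r ∧ G ω = 1} := by
  ext; simp only [mem_inter_iff, mem_ofPred_eq]; tauto

lemma cPr_R_odds_eq_of_condIndep [Fintype Ω] {μ : Ω → ℝ} (hμ : ∀ ω, 0 ≤ μ ω) {y : ℝ}
    (hpos : 0 < Pr μ {ω | X ω = x ∧ M ω = m ∧ Y ω = y ∧ R ω = 1 ∧ G ω = 1})
    (hCI : ∀ r : ℕ, 0 < Pr μ {ω | X ω = x ∧ Y ω = y ∧ G ω = 1} →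
      cPr μ {ω | M ω = m ∧ R ω = r} {ω | X ω = x ∧ Y ω = y ∧ G ω = 1} =
        cPr μ {ω | M ω = m} {ω | X ω = x ∧ Y ω = y ∧ G ω = 1} *
        cPr μ {ω | R ω = r} {ω | X ω = x ∧ Y ω = y ∧ G ω = 1}) :
    cPr μ {ω | R ω = 0} {ω | X ω = x ∧ Y ω = y ∧ G ω = 1} /
        cPr μ {ω | R ω = 1} {ω | X ω = x ∧ Y ω = y ∧ G ω = 1} =
      Pr μ {ω | X ω = x ∧ M ω = m ∧ Y ω = y ∧ R ω = 0 ∧ G ω = 1} /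
        Pr μ {ω | X ω = x ∧ M ω = m ∧ Y ω = y ∧ R ω = 1 ∧ G ω = 1} := by
  have hcell : ∀ r : ℕ, {ω | M ω = m} ∩ {ω | R ω = r} ∩ {ω | X ω = x ∧ Y ω = y ∧ G ω = 1} =
      {ω | X ω = x ∧ M ω = m ∧ Y ω = y ∧ R ω = r ∧ G ω = 1} := by
    intro r; ext; simp only [mem_inter_iff, mem_ofPred_eq]; tauto
  rw [← hcell 0, ← hcell 1]
  rw [← hcell 1] at hpos
  have hC := hpos.trans_le (Pr_mono hμ inter_subset_right)
  exact cPr_div_cPr_eq_of_indep hμ hpos (hCI 0 hC) (hCI 1 hC)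

end Missingness

theorem stmt2_general
    {Ω 𝓧 𝓜 : Type*} [Fintype Ω]
    (μ : Ω → ℝ) (X : Ω → 𝓧) (M : Ω → 𝓜) (Y : Ω → ℝ) (R G : Ω → ℕ)
    (hμ0 : ∀ ω, 0 ≤ μ ω)
    (h0Y : (0 : ℝ) ∈ Set.range Y)
    (hpos : ∀ x ∈ Set.range X, ∀ m ∈ Set.range M, ∀ y ∈ Set.range Y, ∀ r : ℕ,
      (r = 0 ∨ r = 1) →
      0 < Pr μ {ω | X ω = x ∧ M ω = m ∧ Y ω = y ∧ R ω = r ∧ G ω = 1})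
    (hCI : ∀ (m : 𝓜) (r : ℕ) (x : 𝓧) (y : ℝ),
      0 < Pr μ {ω | X ω = x ∧ Y ω = y ∧ G ω = 1} →
      cPr μ {ω | M ω = m ∧ R ω = r} {ω | X ω = x ∧ Y ω = y ∧ G ω = 1} =
        cPr μ {ω | M ω = m} {ω | X ω = x ∧ Y ω = y ∧ G ω = 1} *
        cPr μ {ω | R ω = r} {ω | X ω = x ∧ Y ω = y ∧ G ω = 1})
 :
    ∀ x ∈ Set.range X, ∀ m ∈ Set.range M,
      cE μ (fun ω => OddsR μ X Y R G (X ω) (Y ω))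
          {ω | R ω = 1 ∧ X ω = x ∧ M ω = m ∧ G ω = 1} =
        cPr μ {ω | Y ω = 0} {ω | R ω = 1 ∧ X ω = x ∧ M ω = m ∧ G ω = 1} /
          cPr μ {ω | Y ω = 0} {ω | R ω = 0 ∧ X ω = x ∧ M ω = m ∧ G ω = 1} := by
  intro x hx m hm
  have hodds : ∀ y ∈ range Y, _ := fun y hy =>
    cPr_R_odds_eq_of_condIndep hμ0 (hpos x hx m hm y hy 1 (Or.inr rfl)) (hCI m · x y)
  have hOR : ∀ y ∈ Finset.univ.image Y,
      OddsR μ X Y R G x y * Pr μ ({ω | Y ω = y} ∩ {ω | R ω = 1 ∧ X ω = x ∧ M ω = m ∧ G ω = 1}) =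
        Pr μ ({ω | Y ω = 0} ∩ {ω | R ω = 1 ∧ X ω = x ∧ M ω = m ∧ G ω = 1}) /
          Pr μ ({ω | Y ω = 0} ∩ {ω | R ω = 0 ∧ X ω = x ∧ M ω = m ∧ G ω = 1}) *
        Pr μ ({ω | Y ω = y} ∩ {ω | R ω = 0 ∧ X ω = x ∧ M ω = m ∧ G ω = 1}) := by
    intro y hy
    replace hy : y ∈ range Y := by simpa using hy
    have h1 := (hpos x hx m hm y hy 1 (Or.inr rfl)).ne'
    simp only [setOf_Y_inter_eq]
    rw [OddsR_eq_div, hodds y hy, hodds 0 h0Y]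
    field_simp
  rw [cE_eq_sum_image Y (OddsR μ X Y R G x) fun ω hω => by rw [hω.2.1], sum_congr rfl hOR,
    ← mul_sum, ← Pr_eq_sum_image, cPr, cPr, div_div_div_eq]
  ring

theorem stmt2
    {Ω 𝓧 𝓜 : Type*} [Fintype Ω]
    (μ : Ω → ℝ) (X : Ω → 𝓧) (M : Ω → 𝓜) (Y : Ω → ℝ) (R G : Ω → ℕ)
    (hμ0 : ∀ ω, 0 ≤ μ ω) (hμ1 : ∑ ω, μ ω = 1)
    (hR : ∀ ω, R ω = 0 ∨ R ω = 1)
    (h0Y : (0 : ℝ) ∈ Set.range Y)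
    (hpos : ∀ x ∈ Set.range X, ∀ m ∈ Set.range M, ∀ y ∈ Set.range Y, ∀ r : ℕ,
      (r = 0 ∨ r = 1) →
      0 < Pr μ {ω | X ω = x ∧ M ω = m ∧ Y ω = y ∧ R ω = r ∧ G ω = 1})
    (hCI : ∀ (m : 𝓜) (r : ℕ) (x : 𝓧) (y : ℝ),
      0 < Pr μ {ω | X ω = x ∧ Y ω = y ∧ G ω = 1} →
      cPr μ {ω | M ω = m ∧ R ω = r} {ω | X ω = x ∧ Y ω = y ∧ G ω = 1} =
        cPr μ {ω | M ω = m} {ω | X ω = x ∧ Y ω = y ∧ G ω = 1} *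
        cPr μ {ω | R ω = r} {ω | X ω = x ∧ Y ω = y ∧ G ω = 1})
 :
    ∀ x ∈ Set.range X, ∀ m ∈ Set.range M,
      cE μ (fun ω => OddsR μ X Y R G (X ω) (Y ω))
          {ω | R ω = 1 ∧ X ω = x ∧ M ω = m ∧ G ω = 1} =
        cPr μ {ω | Y ω = 0} {ω | R ω = 1 ∧ X ω = x ∧ M ω = m ∧ G ω = 1} /
          cPr μ {ω | Y ω = 0} {ω | R ω = 0 ∧ X ω = x ∧ M ω = m ∧ G ω = 1} :=
  stmt2_general μ X M Y R G hμ0 h0Y hpos hCI
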